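/- arXiv:1510.00942 — 2 statements merged into one kernel-verified Lean document; each statement's English description precedes it below -/
import Mathlib

section
/- For every multi-index β ∈ ℕⁿ there is a constant K_β such that for all multi-indices α ∈ ℕⁿ, d_α · d_{α+2β} ≤ K_β · d_{α+β}², where d_γ² = ∫_{𝔹ⁿ} |z^γ|² exp(1/(|z|²−1)) dV(z). -/
open MeasureTheory Set
open scoped ENNReal NNReal Nat

/-!
Integrating in polar coordinates in each variable gives the exact formula
`d_γ² = π^n · γ! / (|γ| + n - 1)! · R(|γ| + n - 1)` with the radial moments
`R(k) = ∫₀¹ s^k e^{1/(s-1)} ds`, so the claim splits into a factorial and a moment inequality.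
For the factorials, `a! (a + 2c)! ≤ 4^c (a + c)!²` in every coordinate, while log-convexity of
`k ↦ k!` handles the denominators. For the moments, `R(k + 2b) ≤ R(k + b)` because the weight lives
on `[0, 1]`, and `R(k) ≤ C · R(k + 1)`: the part of `R(k)` over `[0, 1/2]` is at most `2^{-k-1}`,
which is dominated by the part of `R(k + 1)` over `[1/2, 3/4]`, where the weight is at least `e^{-4}`.
-/

noncomputable section

def radialMoment (h : ℝ → ℝ≥0∞) (k : ℕ) : ℝ≥0∞ :=
  ∫⁻ s in Ioi 0, ENNReal.ofReal (s ^ k) * h s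

lemma volume_norm_sq_preimage_Iic (a : ℝ) :
    volume ((fun z : ℂ => ‖z‖ ^ 2) ⁻¹' Iic a) = ENNReal.ofReal a * NNReal.pi := by
  rcases le_or_gt 0 a with ha | ha
  · have : (fun z : ℂ => ‖z‖ ^ 2) ⁻¹' Iic a = Metric.closedBall 0 √a := by
      ext z
      simp [Real.le_sqrt (norm_nonneg z) ha]
    rw [this, Complex.volume_closedBall, ← ENNReal.ofReal_pow (Real.sqrt_nonneg a),
      Real.sq_sqrt ha]
  · have : (fun z : ℂ => ‖z‖ ^ 2) ⁻¹' Iic a = ∅ :=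
      eq_empty_of_forall_notMem fun z hz => (hz.trans_lt ha).not_ge (by positivity)
    simp [this, ENNReal.ofReal_of_nonpos ha.le]

lemma map_norm_sq_volume :
    Measure.map (fun z : ℂ => ‖z‖ ^ 2) volume = (NNReal.pi : ℝ≥0∞) • volume.restrict (Ioi 0) := by
  have hmeas : Measurable (fun z : ℂ => ‖z‖ ^ 2) := by fun_prop
  have hfin (a : ℝ) : volume ((fun z : ℂ => ‖z‖ ^ 2) ⁻¹' Iic a) ≠ ∞ := by
    rw [volume_norm_sq_preimage_Iic]; finiteness
  refine Measure.ext_of_Ioc' _ _ (fun a b _ => ?_) (fun a b hab => ?_)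
  · rw [Measure.map_apply hmeas measurableSet_Ioc]
    exact ne_top_of_le_ne_top (hfin b) (measure_mono (preimage_mono Ioc_subset_Iic_self))
  · have hIoc : Ioc a b = Iic b \ Iic a := by ext; simp [and_comm]
    rw [Measure.map_apply hmeas measurableSet_Ioc, Measure.smul_apply,
      Measure.restrict_apply measurableSet_Ioc, Ioc_inter_Ioi, Real.volume_Ioc, hIoc,
      preimage_sdiff, measure_sdiff (preimage_mono (Iic_subset_Iic.2 hab.le))
        (hmeas measurableSet_Iic).nullMeasurableSet (hfin a),
      volume_norm_sq_preimage_Iic, volume_norm_sq_preimage_Iic,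
      ENNReal.ofReal_sub _ (le_max_right a 0), ENNReal.ofReal_max, ENNReal.ofReal_zero,
      max_zero, smul_eq_mul, ← ENNReal.sub_mul (fun _ _ => ENNReal.coe_ne_top),
      mul_comm]

lemma lintegral_comp_norm_sq {F : ℝ → ℝ≥0∞} (hF : Measurable F) :
    ∫⁻ z : ℂ, F (‖z‖ ^ 2) = NNReal.pi * ∫⁻ t in Ioi 0, F t := by
  rw [← lintegral_map hF (by fun_prop), map_norm_sq_volume, lintegral_smul_measure, smul_eq_mul]

lemma lintegral_norm_pow_mul_comp_norm_sq (a : ℕ) {h : ℝ → ℝ≥0∞} (hh : Measurable h) :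
    ∫⁻ w : ℂ, ENNReal.ofReal (‖w‖ ^ (2 * a)) * h (‖w‖ ^ 2) = NNReal.pi * radialMoment h a := by
  simp_rw [pow_mul]
  exact lintegral_comp_norm_sq (F := fun t => ENNReal.ofReal (t ^ a) * h t) (by fun_prop)

lemma intervalIntegral_pow_mul_sub_pow (a b : ℕ) {u : ℝ} (hu : 0 < u) :
    ∫ x in 0..u, x ^ a * (u - x) ^ b = u ^ (a + b + 1) * (a ! * b ! / (a + b + 1)! : ℝ) := by
  have hΓ := Complex.Gamma_mul_Gamma_eq_betaIntegral (s := a + 1) (t := b + 1)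
    (by simp; positivity) (by simp; positivity)
  rw [show (a + 1 : ℂ) + (b + 1) = (a + b + 1 : ℕ) + 1 by push_cast; ring,
    Complex.Gamma_nat_eq_factorial, Complex.Gamma_nat_eq_factorial,
    Complex.Gamma_nat_eq_factorial] at hΓ
  have hβ := Complex.betaIntegral_scaled (a + 1) (b + 1) hu
  simp only [add_sub_cancel_right, show (a + 1 : ℂ) + (b + 1) - 1 = (a + b + 1 : ℕ) by
    push_cast; ring, Complex.cpow_natCast] at hβ
  have hB : Complex.betaIntegral (a + 1) (b + 1) = a ! * b ! / (a + b + 1)! := by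
    rw [hΓ, mul_div_cancel_left₀ _ (by exact_mod_cast (a + b + 1).factorial_ne_zero)]
  apply Complex.ofReal_injective
  rw [← intervalIntegral.integral_ofReal]
  push_cast
  rw [hβ, hB]

lemma lintegral_Ioo_pow_mul_sub_pow (a b : ℕ) {u : ℝ} (hu : 0 < u) :
    ∫⁻ s in Ioo 0 u, ENNReal.ofReal (s ^ a * (u - s) ^ b)
      = ENNReal.ofReal (u ^ (a + b + 1) * (a ! * b ! / (a + b + 1)! : ℝ)) := by
  rw [← ofReal_integral_eq_lintegral_ofReal, ← integral_Ioc_eq_integral_Ioo,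
    ← intervalIntegral.integral_of_le hu.le, intervalIntegral_pow_mul_sub_pow a b hu]
  · exact (by fun_prop : Continuous fun s : ℝ => s ^ a * (u - s) ^ b).integrableOn_Icc.mono_set
      Ioo_subset_Icc_self
  · refine ae_restrict_of_forall_mem measurableSet_Ioo fun s hs => ?_
    have := sub_pos.2 hs.2
    have := hs.1
    positivity

/-- Substituting `u = t + s` and integrating over `0 < t < u` first produces a Beta integral. -/
lemma lintegral_pow_mul_radialMoment_comp_add (a b : ℕ) {h : ℝ → ℝ≥0∞} (hh : Measurable h) :
    ∫⁻ t in Ioi 0, ENNReal.ofReal (t ^ a) * radialMoment (fun s => h (t + s)) b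
      = ENNReal.ofReal (a ! * b ! / (a + b + 1)! : ℝ) * radialMoment h (a + b + 1) := by
  set G : ℝ → ℝ → ℝ≥0∞ := fun t u =>
    (Ioo 0 u).indicator (fun t => ENNReal.ofReal (t ^ a * (u - t) ^ b) * h u) t
  have hG : Measurable (Function.uncurry G) := by
    refine Measurable.ite ?_ (by fun_prop) measurable_const
    exact (measurableSet_lt measurable_const measurable_fst).inter
      (measurableSet_lt measurable_fst measurable_snd)
  have hinner (t : ℝ) : (Ioi 0).indicator
      (fun t => ENNReal.ofReal (t ^ a) * radialMoment (fun s => h (t + s)) b) t = ∫⁻ u, G t u := by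
    by_cases ht : t ∈ Ioi 0
    · rw [indicator_of_mem ht, radialMoment, ← lintegral_const_mul' _ _ ENNReal.ofReal_ne_top,
        ← lintegral_indicator measurableSet_Ioi, ← lintegral_sub_right_eq_self _ t]
      refine lintegral_congr fun u => ?_
      dsimp only [G]
      by_cases htu : t < u
      · have hut : 0 < u - t := sub_pos.2 htu
        have ht₀ : 0 < t := ht
        rw [indicator_of_mem (mem_Ioi.2 hut),
          indicator_of_mem (show t ∈ Ioo 0 u from ⟨ht, htu⟩),
          add_sub_cancel, ENNReal.ofReal_mul (by positivity), mul_assoc]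
      · rw [indicator_of_notMem (by simpa using htu),
          indicator_of_notMem fun hmem : t ∈ Ioo 0 u => htu hmem.2]
    · rw [indicator_of_notMem ht]
      simp [G, indicator_of_notMem (fun h : t ∈ Ioo _ _ => ht h.1)]
  have houter (u : ℝ) : ∫⁻ t, G t u = (Ioi 0).indicator
      (fun u => ENNReal.ofReal (a ! * b ! / (a + b + 1)! : ℝ) *
        (ENNReal.ofReal (u ^ (a + b + 1)) * h u)) u := by
    rw [lintegral_indicator measurableSet_Ioo, lintegral_mul_const _ (by fun_prop)]
    by_cases hu : u ∈ Ioi 0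
    · have := mem_Ioi.1 hu
      rw [indicator_of_mem hu, lintegral_Ioo_pow_mul_sub_pow a b hu,
        ENNReal.ofReal_mul (by positivity)]
      ring
    · rw [indicator_of_notMem hu, Ioo_eq_empty (by simpa using hu)]
      simp
  calc ∫⁻ t in Ioi 0, ENNReal.ofReal (t ^ a) * radialMoment (fun s => h (t + s)) b
      = ∫⁻ t, ∫⁻ u, G t u := by
        rw [← lintegral_indicator measurableSet_Ioi]; exact lintegral_congr hinner
    _ = ∫⁻ u, ∫⁻ t, G t u := lintegral_lintegral_swap hG.aemeasurable
    _ = _ := by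
        rw [lintegral_congr houter, lintegral_indicator measurableSet_Ioi, radialMoment,
          lintegral_const_mul' _ _ ENNReal.ofReal_ne_top]

lemma lintegral_fin_cons {n : ℕ} {E : Type*} [MeasureSpace E] [SigmaFinite (volume : Measure E)]
    {f : (Fin (n + 1) → E) → ℝ≥0∞} (hf : Measurable f) :
    ∫⁻ z, f z = ∫⁻ w, ∫⁻ y, f (Fin.cons w y) := by
  rw [← (volume_preserving_piFinSuccAbove (fun _ => E) 0).symm.lintegral_comp hf,
    Measure.volume_eq_prod, lintegral_prod]
  · simp [MeasurableEquiv.piFinSuccAbove_symm_apply]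
    rfl
  · exact (hf.comp (MeasurableEquiv.measurable _)).aemeasurable

/-- Indexed by `Fin (n + 1)` so that `|γ| + dim - 1` needs no truncated subtraction. -/
def monomialCoeff {n : ℕ} (γ : Fin (n + 1) → ℕ) : ℝ :=
  (∏ i, ((γ i)! : ℝ)) / ((∑ i, γ i) + n)!

lemma monomialCoeff_nonneg {n : ℕ} {γ : Fin (n + 1) → ℕ} : 0 ≤ monomialCoeff γ := by
  unfold monomialCoeff; positivity

lemma monomialCoeff_tail_mul {n : ℕ} (γ : Fin (n + 2) → ℕ) :
    monomialCoeff (fun j => γ (Fin.succ j)) *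
        ((γ 0)! * (∑ j, γ (Fin.succ j) + n)! / (γ 0 + (∑ j, γ (Fin.succ j) + n) + 1)! : ℝ)
      = monomialCoeff γ := by
  rw [monomialCoeff, monomialCoeff, Fin.prod_univ_succ (f := fun i => ((γ i)! : ℝ)),
    Fin.sum_univ_succ (f := γ),
    show γ 0 + (∑ j, γ (Fin.succ j) + n) + 1 = γ 0 + ∑ j, γ (Fin.succ j) + (n + 1) by ring]
  field_simp

theorem lintegral_prod_norm_pow_mul_comp_sum (n : ℕ) (γ : Fin (n + 1) → ℕ) {h : ℝ → ℝ≥0∞}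
    (hh : Measurable h) :
    ∫⁻ z : Fin (n + 1) → ℂ, (∏ i, ENNReal.ofReal (‖z i‖ ^ (2 * γ i))) * h (∑ i, ‖z i‖ ^ 2)
      = NNReal.pi ^ (n + 1) * ENNReal.ofReal (monomialCoeff γ) * radialMoment h (∑ i, γ i + n) := by
  induction n generalizing h with
  | zero =>
    have hc : monomialCoeff γ = 1 := by
      simp [monomialCoeff, (γ 0).factorial_ne_zero]
    simp only [Fin.prod_univ_succ, Fin.prod_univ_zero, Fin.sum_univ_succ, Fin.sum_univ_zero, hc,
      ENNReal.ofReal_one, mul_one, add_zero, zero_add, pow_one]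
    rw [← lintegral_norm_pow_mul_comp_norm_sq _ hh]
    exact (volume_preserving_funUnique (Fin 1) ℂ).lintegral_comp
      (f := fun w => ENNReal.ofReal (‖w‖ ^ (2 * γ 0)) * h (‖w‖ ^ 2)) (by fun_prop)
  | succ n ih =>
    set k := ∑ j, γ (Fin.succ j) + n
    have hshift : Measurable fun t => radialMoment (fun s => h (t + s)) k :=
      (by fun_prop : Measurable fun p : ℝ × ℝ => ENNReal.ofReal (p.2 ^ k) * h (p.1 + p.2))
        |>.lintegral_prod_right'
    calc
      _ = ∫⁻ w : ℂ, ENNReal.ofReal (‖w‖ ^ (2 * γ 0)) *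
            ∫⁻ y : Fin (n + 1) → ℂ, (∏ j, ENNReal.ofReal (‖y j‖ ^ (2 * γ (Fin.succ j)))) *
              h (‖w‖ ^ 2 + ∑ j, ‖y j‖ ^ 2) := by
        rw [lintegral_fin_cons (by fun_prop)]
        refine lintegral_congr fun w => ?_
        rw [← lintegral_const_mul' _ _ ENNReal.ofReal_ne_top]
        refine lintegral_congr fun y => ?_
        simp only [Fin.prod_univ_succ (n := n + 1), Fin.sum_univ_succ (n := n + 1),
          Fin.cons_zero, Fin.cons_succ, mul_assoc]
      _ = ∫⁻ w : ℂ, ENNReal.ofReal (‖w‖ ^ (2 * γ 0)) *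
            (NNReal.pi ^ (n + 1) * ENNReal.ofReal (monomialCoeff fun j => γ (Fin.succ j)) *
              radialMoment (fun s => h (‖w‖ ^ 2 + s)) k) := by
        refine lintegral_congr fun w => ?_
        rw [ih (fun j => γ (Fin.succ j)) (h := fun s => h (‖w‖ ^ 2 + s)) (by fun_prop)]
      _ = NNReal.pi ^ (n + 1) * ENNReal.ofReal (monomialCoeff fun j => γ (Fin.succ j)) *
            (NNReal.pi * radialMoment (fun t => radialMoment (fun s => h (t + s)) k) (γ 0)) := by
        rw [← lintegral_norm_pow_mul_comp_norm_sq _ hshift, ← lintegral_const_mul' _ _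
          (ENNReal.mul_ne_top (ENNReal.pow_ne_top ENNReal.coe_ne_top) ENNReal.ofReal_ne_top)]
        exact lintegral_congr fun w => by ring
      _ = _ := by
        rw [radialMoment, lintegral_pow_mul_radialMoment_comp_add _ _ hh]
        have hdeg : γ 0 + k + 1 = ∑ i, γ i + (n + 1) := by
          rw [Fin.sum_univ_succ]; ring
        rw [← monomialCoeff_tail_mul γ, ENNReal.ofReal_mul monomialCoeff_nonneg,
          hdeg]
        ring

lemma le_pow_mul_of_le_mul_succ {u : ℕ → ℝ≥0∞} {C : ℝ≥0∞} (hu : ∀ k, u k ≤ C * u (k + 1))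
    (k j : ℕ) : u k ≤ C ^ j * u (k + j) := by
  induction j with
  | zero => simp
  | succ j ih =>
    calc u k ≤ C ^ j * u (k + j) := ih
      _ ≤ C ^ j * (C * u (k + j + 1)) := by gcongr; exact hu _
      _ = C ^ (j + 1) * u (k + (j + 1)) := by rw [pow_succ, mul_assoc, add_assoc]

section RadialMoment

variable {h : ℝ → ℝ≥0∞}

lemma radialMoment_add_le (hsupp : ∀ s, 1 ≤ s → h s = 0) (k j : ℕ) :
    radialMoment h (k + j) ≤ radialMoment h k := by
  refine setLIntegral_mono' measurableSet_Ioi fun s hs => ?_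
  rcases lt_or_ge s 1 with hs1 | hs1
  · gcongr ?_ * _
    exact ENNReal.ofReal_le_ofReal (pow_le_pow_of_le_one (le_of_lt hs) hs1.le (k.le_add_right j))
  · simp [hsupp s hs1]

lemma radialMoment_lt_top (hle : ∀ s, h s ≤ 1) (hsupp : ∀ s, 1 ≤ s → h s = 0) (k : ℕ) :
    radialMoment h k < ∞ := by
  have hpt : ∀ s ∈ Ioi (0 : ℝ), ENNReal.ofReal (s ^ k) * h s ≤ (Iio 1).indicator 1 s := by
    intro s hs
    rcases lt_or_ge s 1 with hs1 | hs1
    · rw [indicator_of_mem (mem_Iio.2 hs1), Pi.one_apply, ← one_mul 1]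
      gcongr
      · exact ENNReal.ofReal_le_one.2 (pow_le_one₀ (le_of_lt hs) hs1.le)
      · exact hle s
    · simp [hsupp s hs1]
  calc radialMoment h k ≤ ∫⁻ s in Ioi 0, (Iio 1).indicator 1 s :=
        setLIntegral_mono' measurableSet_Ioi hpt
    _ < ∞ := by
        rw [lintegral_indicator_one measurableSet_Iio, Measure.restrict_apply measurableSet_Iio,
          Iio_inter_Ioi, Real.volume_Ioo]
        exact ENNReal.ofReal_lt_top

lemma ofReal_le_radialMoment {ε : ℝ} (hε : ∀ s ∈ Ioc (1 / 2 : ℝ) (3 / 4), ENNReal.ofReal ε ≤ h s)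
    (k : ℕ) : ENNReal.ofReal ((1 / 2) ^ k * ε / 4) ≤ radialMoment h k :=
  calc ENNReal.ofReal ((1 / 2) ^ k * ε / 4)
      = ∫⁻ _ in Ioc (1 / 2 : ℝ) (3 / 4), ENNReal.ofReal ((1 / 2) ^ k) * ENNReal.ofReal ε := by
        rw [setLIntegral_const, Real.volume_Ioc, ← ENNReal.ofReal_mul (by positivity),
          ← ENNReal.ofReal_mul' (by norm_num)]
        congr 1
        ring
    _ ≤ ∫⁻ s in Ioc (1 / 2 : ℝ) (3 / 4), ENNReal.ofReal (s ^ k) * h s := by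
        refine setLIntegral_mono' measurableSet_Ioc fun s hs => ?_
        gcongr
        · exact hs.1.le
        · exact hε s hs
    _ ≤ radialMoment h k :=
        lintegral_mono_set (Ioc_subset_Ioi_self.trans (Ioi_subset_Ioi (by norm_num)))

lemma radialMoment_le_mul_succ (hle : ∀ s, h s ≤ 1) {ε : ℝ} (hεpos : 0 < ε)
    (hε : ∀ s ∈ Ioc (1 / 2 : ℝ) (3 / 4), ENNReal.ofReal ε ≤ h s) (k : ℕ) :
    radialMoment h k ≤ ENNReal.ofReal (2 + 4 / ε) * radialMoment h (k + 1) := by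
  have hpt : ∀ s ∈ Ioi (0 : ℝ), ENNReal.ofReal (s ^ k) * h s ≤
      (Iic (1 / 2)).indicator (fun _ => ENNReal.ofReal ((1 / 2) ^ k)) s +
        2 * (ENNReal.ofReal (s ^ (k + 1)) * h s) := by
    intro s hs
    rcases le_or_gt s (1 / 2) with hs2 | hs2
    · rw [indicator_of_mem (mem_Iic.2 hs2)]
      refine le_add_right (mul_le_of_le_of_le_one ?_ (hle s))
      exact ENNReal.ofReal_le_ofReal (pow_le_pow_left₀ (le_of_lt hs) hs2 k)
    · refine le_add_left ?_
      rw [← mul_assoc, ← ENNReal.ofReal_ofNat 2, ← ENNReal.ofReal_mul (by norm_num)]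
      gcongr
      calc s ^ k = 1 * s ^ k := (one_mul _).symm
        _ ≤ 2 * s * s ^ k := by gcongr; linarith
        _ = 2 * s ^ (k + 1) := by ring
  calc radialMoment h k
      ≤ ∫⁻ s in Ioi 0, ((Iic (1 / 2)).indicator (fun _ => ENNReal.ofReal ((1 / 2) ^ k)) s +
          2 * (ENNReal.ofReal (s ^ (k + 1)) * h s)) := setLIntegral_mono' measurableSet_Ioi hpt
    _ = ENNReal.ofReal ((1 / 2) ^ (k + 1)) + 2 * radialMoment h (k + 1) := by
        rw [lintegral_add_left (measurable_const.indicator measurableSet_Iic),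
          lintegral_indicator_const measurableSet_Iic, Measure.restrict_apply measurableSet_Iic,
          Iic_inter_Ioi, Real.volume_Ioc, ← ENNReal.ofReal_mul (by positivity),
          lintegral_const_mul' _ _ (by norm_num), radialMoment, sub_zero, ← pow_succ]
    _ ≤ ENNReal.ofReal (4 / ε) * radialMoment h (k + 1) + 2 * radialMoment h (k + 1) := by
        gcongr
        calc ENNReal.ofReal ((1 / 2) ^ (k + 1))
            = ENNReal.ofReal (4 / ε) * ENNReal.ofReal ((1 / 2) ^ (k + 1) * ε / 4) := by
              rw [← ENNReal.ofReal_mul (by positivity)]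
              congr 1
              field_simp
          _ ≤ _ := by gcongr; exact ofReal_le_radialMoment hε _
    _ = ENNReal.ofReal (2 + 4 / ε) * radialMoment h (k + 1) := by
        rw [ENNReal.ofReal_add (by norm_num) (by positivity), ENNReal.ofReal_ofNat, add_mul,
          add_comm]

lemma radialMoment_mul_le (hle : ∀ s, h s ≤ 1) (hsupp : ∀ s, 1 ≤ s → h s = 0) {ε : ℝ}
    (hεpos : 0 < ε) (hε : ∀ s ∈ Ioc (1 / 2 : ℝ) (3 / 4), ENNReal.ofReal ε ≤ h s) (k j : ℕ) :
    radialMoment h k * radialMoment h (k + 2 * j)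
      ≤ ENNReal.ofReal (2 + 4 / ε) ^ j * radialMoment h (k + j) ^ 2 := by
  calc radialMoment h k * radialMoment h (k + 2 * j)
      ≤ (ENNReal.ofReal (2 + 4 / ε) ^ j * radialMoment h (k + j)) * radialMoment h (k + j) := by
        gcongr
        · exact le_pow_mul_of_le_mul_succ (radialMoment_le_mul_succ hle hεpos hε) k j
        · rw [two_mul, ← add_assoc]
          exact radialMoment_add_le hsupp _ _
    _ = _ := by ring

end RadialMoment

lemma factorial_mul_factorial_add_two_mul_le (a c : ℕ) :
    a ! * (a + 2 * c)! ≤ 4 ^ c * (a + c)! ^ 2 := by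
  induction c with
  | zero => simp [sq]
  | succ c ih =>
    calc a ! * (a + 2 * (c + 1))!
        = a ! * (a + 2 * c)! * ((a + 2 * c + 1) * (a + 2 * c + 2)) := by
          rw [show a + 2 * (c + 1) = a + 2 * c + 1 + 1 by ring, Nat.factorial_succ,
            Nat.factorial_succ]
          ring
      _ ≤ 4 ^ c * (a + c)! ^ 2 * ((2 * (a + c + 1)) * (2 * (a + c + 1))) := by
          gcongr <;> omega
      _ = 4 ^ (c + 1) * (a + (c + 1))! ^ 2 := by
          rw [← add_assoc, Nat.factorial_succ]
          ring

lemma sq_factorial_add_le (M b : ℕ) : (M + b)! ^ 2 ≤ M ! * (M + 2 * b)! :=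
  calc (M + b)! ^ 2 = M ! * (M + 1).ascFactorial b * (M + b)! := by
        rw [Nat.factorial_mul_ascFactorial, sq]
    _ ≤ M ! * (M + b + 1).ascFactorial b * (M + b)! := by gcongr; omega
    _ = M ! * (M + 2 * b)! := by
        rw [mul_assoc, mul_comm _ (M + b)!, Nat.factorial_mul_ascFactorial, two_mul, add_assoc]

lemma prod_factorial_mul_prod_factorial_le {ι : Type*} (s : Finset ι) (α β : ι → ℕ) :
    (∏ i ∈ s, (α i)!) * ∏ i ∈ s, (α i + 2 * β i)!
      ≤ 4 ^ (∑ i ∈ s, β i) * (∏ i ∈ s, (α i + β i)!) ^ 2 := by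
  rw [← Finset.prod_mul_distrib, ← Finset.prod_pow, ← Finset.prod_pow_eq_pow_sum,
    ← Finset.prod_mul_distrib]
  exact Finset.prod_le_prod' fun i _ => factorial_mul_factorial_add_two_mul_le _ _

lemma monomialCoeff_mul_le {n : ℕ} (α β : Fin (n + 1) → ℕ) :
    monomialCoeff α * monomialCoeff (α + 2 • β) ≤ 4 ^ (∑ i, β i) * monomialCoeff (α + β) ^ 2 := by
  have hsum₁ : ∑ i, (α + β) i = ∑ i, α i + ∑ i, β i := Finset.sum_add_distrib
  have hsum₂ : ∑ i, (α + 2 • β) i = ∑ i, α i + 2 * ∑ i, β i := by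
    simp [Finset.sum_add_distrib, Finset.mul_sum]
  have hnum : ((∏ i, (α i)! : ℕ) : ℝ) * ((∏ i, ((α + 2 • β) i)! : ℕ) : ℝ)
      ≤ 4 ^ (∑ i, β i) * ((∏ i, ((α + β) i)! : ℕ) : ℝ) ^ 2 := by
    exact_mod_cast prod_factorial_mul_prod_factorial_le Finset.univ α β
  have hden : (((∑ i, α i + ∑ i, β i) + n)! : ℝ) ^ 2
      ≤ ((∑ i, α i + n)! : ℝ) * ((∑ i, α i + 2 * ∑ i, β i) + n)! := by
    have := sq_factorial_add_le (∑ i, α i + n) (∑ i, β i)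
    rw [show ∑ i, α i + n + ∑ i, β i = ∑ i, α i + ∑ i, β i + n by ring,
      show ∑ i, α i + n + 2 * ∑ i, β i = ∑ i, α i + 2 * ∑ i, β i + n by ring] at this
    exact_mod_cast this
  simp only [monomialCoeff, hsum₁, hsum₂, Nat.cast_prod] at hnum ⊢
  rw [div_mul_div_comm, div_pow, ← mul_div_assoc]
  exact div_le_div₀ (by positivity) hnum (by positivity) hden

def ballWeight (s : ℝ) : ℝ≥0∞ :=
  (Iio 1).indicator (fun s => ENNReal.ofReal (Real.exp (1 / (s - 1)))) s

lemma measurable_ballWeight : Measurable ballWeight :=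
  (by fun_prop : Measurable fun s : ℝ => ENNReal.ofReal (Real.exp (1 / (s - 1)))).indicator
    measurableSet_Iio

lemma ballWeight_of_one_le {s : ℝ} (hs : 1 ≤ s) : ballWeight s = 0 :=
  indicator_of_notMem (notMem_Iio.2 hs) _

lemma ballWeight_le_one (s : ℝ) : ballWeight s ≤ 1 := by
  rcases lt_or_ge s 1 with hs | hs
  · rw [ballWeight, indicator_of_mem (mem_Iio.2 hs)]
    refine ENNReal.ofReal_le_one.2 (Real.exp_le_one_iff.2 ?_)
    exact div_nonpos_of_nonneg_of_nonpos zero_le_one (by linarith)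
  · simp [ballWeight_of_one_le hs]

lemma exp_neg_four_le_ballWeight {s : ℝ} (hs : s ∈ Ioc (1 / 2 : ℝ) (3 / 4)) :
    ENNReal.ofReal (Real.exp (-4)) ≤ ballWeight s := by
  obtain ⟨hs₁, hs₂⟩ := hs
  rw [ballWeight, indicator_of_mem (mem_Iio.2 (by linarith))]
  refine ENNReal.ofReal_le_ofReal (Real.exp_le_exp.2 ?_)
  rw [le_div_iff_of_neg (by linarith)]
  linarith

def monomialNormSq {n : ℕ} (γ : Fin n → ℕ) : ℝ≥0∞ :=
  ∫⁻ z : Fin n → ℂ, (∏ i, ENNReal.ofReal (‖z i‖ ^ (2 * γ i))) * ballWeight (∑ i, ‖z i‖ ^ 2)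

lemma integral_ball_eq_toReal_monomialNormSq {n : ℕ} (γ : Fin n → ℕ) :
    ∫ z in {z : Fin n → ℂ | ∑ i, ‖z i‖ ^ 2 < 1},
        (∏ i, ‖z i‖ ^ (2 * γ i)) * Real.exp (1 / ((∑ i, ‖z i‖ ^ 2) - 1))
      = (monomialNormSq γ).toReal := by
  set S := {z : Fin n → ℂ | ∑ i, ‖z i‖ ^ 2 < 1}
  have hS : MeasurableSet S := measurableSet_lt (by fun_prop) measurable_const
  rw [integral_eq_lintegral_of_nonneg_ae
    (Filter.Eventually.of_forall fun z => by positivity) (by fun_prop), monomialNormSq,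
    ← lintegral_indicator hS]
  congr 1
  refine lintegral_congr fun z => ?_
  by_cases hz : z ∈ S
  · rw [indicator_of_mem hz, ballWeight, indicator_of_mem (mem_Iio.2 hz),
      ENNReal.ofReal_mul (by positivity), ENNReal.ofReal_prod_of_nonneg fun i _ => by positivity]
  · rw [indicator_of_notMem hz, ballWeight_of_one_le (not_lt.1 hz), mul_zero]

lemma monomialNormSq_eq {n : ℕ} (γ : Fin (n + 1) → ℕ) :
    monomialNormSq γ
      = NNReal.pi ^ (n + 1) * ENNReal.ofReal (monomialCoeff γ) *
          radialMoment ballWeight (∑ i, γ i + n) :=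
  lintegral_prod_norm_pow_mul_comp_sum n γ measurable_ballWeight

lemma monomialNormSq_lt_top {n : ℕ} (γ : Fin (n + 1) → ℕ) : monomialNormSq γ < ∞ := by
  rw [monomialNormSq_eq]
  exact ENNReal.mul_lt_top (by finiteness)
    (radialMoment_lt_top ballWeight_le_one (fun _ => ballWeight_of_one_le) _)

lemma monomialNormSq_mul_le {n : ℕ} (α β : Fin (n + 1) → ℕ) :
    monomialNormSq α * monomialNormSq (α + 2 • β)
      ≤ ENNReal.ofReal (4 * (2 + 4 / Real.exp (-4))) ^ (∑ i, β i) * monomialNormSq (α + β) ^ 2 := by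
  set b := ∑ i, β i
  set k := ∑ i, α i + n
  have hdeg₁ : ∑ i, (α + β) i + n = k + b := by
    simp only [Pi.add_apply, Finset.sum_add_distrib, k, b]; ring
  have hdeg₂ : ∑ i, (α + 2 • β) i + n = k + 2 * b := by
    simp only [Pi.add_apply, Pi.smul_apply, smul_eq_mul, Finset.sum_add_distrib, ← Finset.mul_sum,
      k, b]; ring
  have hcoeff : ENNReal.ofReal (monomialCoeff α) * ENNReal.ofReal (monomialCoeff (α + 2 • β))
      ≤ ENNReal.ofReal 4 ^ b * ENNReal.ofReal (monomialCoeff (α + β)) ^ 2 := by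
    rw [← ENNReal.ofReal_mul monomialCoeff_nonneg, ← ENNReal.ofReal_pow (by norm_num),
      ← ENNReal.ofReal_pow monomialCoeff_nonneg, ← ENNReal.ofReal_mul (by positivity)]
    exact ENNReal.ofReal_le_ofReal (monomialCoeff_mul_le α β)
  have hmoment := radialMoment_mul_le ballWeight_le_one (fun _ => ballWeight_of_one_le)
    (Real.exp_pos (-4)) (fun _ => exp_neg_four_le_ballWeight) k b
  rw [monomialNormSq_eq, monomialNormSq_eq, monomialNormSq_eq, hdeg₁, hdeg₂,
    ENNReal.ofReal_mul (by norm_num), mul_pow]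
  calc _ = (NNReal.pi ^ (n + 1)) ^ 2 *
        (ENNReal.ofReal (monomialCoeff α) * ENNReal.ofReal (monomialCoeff (α + 2 • β))) *
        (radialMoment ballWeight k * radialMoment ballWeight (k + 2 * b)) := by ring
    _ ≤ (NNReal.pi ^ (n + 1)) ^ 2 *
        (ENNReal.ofReal 4 ^ b * ENNReal.ofReal (monomialCoeff (α + β)) ^ 2) *
        (ENNReal.ofReal (2 + 4 / Real.exp (-4)) ^ b * radialMoment ballWeight (k + b) ^ 2) := by
        gcongr
    _ = _ := by ring

end

/-- Reverse Cauchy–Schwarz for monomial norms on the unit ball of `ℂⁿ` with weight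
`exp(1/(‖z‖²−1))`: for every `β` there is `K_β > 0` with
`d_α·d_{α+2β} ≤ K_β·d_{α+β}²` for all `α`, where
`d_γ² = ∫_{𝔹ⁿ} ∏ᵢ|zᵢ|^{2γᵢ}·exp(1/(‖z‖²−1)) dV`. -/
theorem stmt10 (n : ℕ) (β : Fin n → ℕ)
    (d : (Fin n → ℕ) → ℝ)
    (hd_nonneg : ∀ γ, 0 ≤ d γ)
    (hd : ∀ γ : Fin n → ℕ, d γ ^ 2 =
      ∫ z in {z : Fin n → ℂ | ∑ i, ‖z i‖ ^ 2 < 1},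
        (∏ i, ‖z i‖ ^ (2 * γ i)) * Real.exp (1 / ((∑ i, ‖z i‖ ^ 2) - 1))) :
    ∃ K : ℝ, 0 < K ∧ ∀ α : Fin n → ℕ,
      d α * d (α + 2 • β) ≤ K * d (α + β) ^ 2 := by
  rcases n with _ | n
  · refine ⟨1, one_pos, fun α => ?_⟩
    rw [Subsingleton.elim (α + 2 • β) α, Subsingleton.elim (α + β) α, one_mul, sq]
  set C : ℝ := 4 * (2 + 4 / Real.exp (-4))
  refine ⟨√(C ^ ∑ i, β i), by positivity, fun α => ?_⟩
  have hd' (γ : Fin (n + 1) → ℕ) : d γ ^ 2 = (monomialNormSq γ).toReal :=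
    (hd γ).trans (integral_ball_eq_toReal_monomialNormSq γ)
  have hsq : (d α * d (α + 2 • β)) ^ 2 ≤ (√(C ^ ∑ i, β i) * d (α + β) ^ 2) ^ 2 := by
    rw [mul_pow, mul_pow, Real.sq_sqrt (by positivity), hd', hd', hd', ← ENNReal.toReal_mul,
      ← ENNReal.toReal_pow, ← ENNReal.toReal_ofReal (by positivity : 0 ≤ C ^ ∑ i, β i),
      ← ENNReal.toReal_mul, ENNReal.ofReal_pow (by positivity)]
    exact ENNReal.toReal_mono (by finiteness [monomialNormSq_lt_top (α + β)])
      (monomialNormSq_mul_le α β)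
  exact (pow_le_pow_iff_left₀ (mul_nonneg (hd_nonneg _) (hd_nonneg _))
    (by positivity) two_ne_zero).1 hsq
end

section
/- Let w : [0,1) → (0,∞) be continuous with ∫₀¹ w finite, let a ∈ (0,1), and suppose δ : [0,1) → ℝ is continuous, integrable, bounded, and δ ≥ c > 0 on (a,1). Define Φ(x) = ∫₀¹ r^x δ(r) dr and Φ̃(x) = ∫_a¹ r^x δ(r) dr. Then Φ(x)/Φ̃(x) → 1 as x → ∞. -/
open MeasureTheory Set Filter Asymptotics

/-!
Split `Φ = T + Φ̃` with the tail `T(x) = ∫_{(0,a]} rˣ δ(r) dr`. Then `|T(x)| ≤ aˣ ∫₀ᵃ |δ|`, while for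
any `b ∈ (a,1)` the lower bound `δ ≥ c` on `(b,1)` gives `Φ̃(x) ≥ c (1-b) bˣ`. Since `a < b`,
`aˣ = o(bˣ)`, hence `T = o(Φ̃)` and `Φ/Φ̃ = 1 + T/Φ̃ → 1`.
-/

lemma isLittleO_rpow_rpow_of_lt_left {a b : ℝ} (ha : 0 ≤ a) (hab : a < b) :
    (fun x : ℝ => a ^ x) =o[atTop] fun x => b ^ x := by
  have hb : 0 < b := ha.trans_lt hab
  refine (isLittleO_iff_tendsto' (Eventually.of_forall fun x hx =>
    absurd hx (Real.rpow_pos_of_pos hb x).ne')).2 ?_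
  have hlim : Tendsto (fun x : ℝ => (a / b) ^ x) atTop (nhds 0) :=
    tendsto_rpow_atTop_of_base_lt_one _ (by linarith [div_nonneg ha hb.le])
      ((div_lt_one hb).2 hab)
  simpa only [Real.div_rpow ha hb.le] using hlim

section Moments

variable {f : ℝ → ℝ} {s : Set ℝ} {x : ℝ}

lemma integrableOn_rpow_mul (hs : MeasurableSet s) (hs1 : s ⊆ Icc 0 1) (hx : 0 ≤ x)
    (hf : IntegrableOn f s) : IntegrableOn (fun r => r ^ x * f r) s := by
  refine hf.bdd_mul (c := 1) (measurable_id.pow_const x).aestronglyMeasurable ?_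
  filter_upwards [ae_restrict_mem hs] with r hr
  obtain ⟨hr0, hr1⟩ := hs1 hr
  rw [Real.norm_of_nonneg (Real.rpow_nonneg hr0 x)]
  exact Real.rpow_le_one hr0 hr1 hx

lemma abs_setIntegral_rpow_mul_le {a : ℝ} (hs : MeasurableSet s) (hsa : s ⊆ Icc 0 a)
    (hx : 0 ≤ x) (hf : IntegrableOn f s) :
    |∫ r in s, r ^ x * f r| ≤ a ^ x * ∫ r in s, |f r| := by
  rw [← integral_const_mul]
  refine abs_integral_le_integral_abs.trans (integral_mono_of_nonneg
    (Eventually.of_forall fun _ => abs_nonneg _) (hf.abs.const_mul _) ?_)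
  filter_upwards [ae_restrict_mem hs] with r hr
  obtain ⟨hr0, hra⟩ := hsa hr
  rw [abs_mul, abs_of_nonneg (Real.rpow_nonneg hr0 x)]
  gcongr

lemma mul_rpow_le_setIntegral_Ioo_rpow_mul {a b c : ℝ} (ha : 0 ≤ a) (hab : a ≤ b) (hb : b ≤ 1)
    (hc : 0 ≤ c) (hx : 0 ≤ x) (hf : IntegrableOn f (Ioo a 1))
    (hfc : ∀ r ∈ Ioo a 1, c ≤ f r) :
    c * (1 - b) * b ^ x ≤ ∫ r in Ioo a 1, r ^ x * f r := by
  have hsub : Ioo b 1 ⊆ Ioo a 1 := Ioo_subset_Ioo_left hab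
  have hint : IntegrableOn (fun r => r ^ x * f r) (Ioo a 1) :=
    integrableOn_rpow_mul measurableSet_Ioo (Ioo_subset_Icc_self.trans (Icc_subset_Icc ha le_rfl))
      hx hf
  calc c * (1 - b) * b ^ x = ∫ _ in Ioo b 1, b ^ x * c := by
        rw [setIntegral_const, measureReal_def, Real.volume_Ioo,
          ENNReal.toReal_ofReal (by linarith), smul_eq_mul]
        ring
    _ ≤ ∫ r in Ioo b 1, r ^ x * f r := by
        refine setIntegral_mono_on (integrableOn_const measure_Ioo_lt_top.ne)
          (hint.mono_set hsub) measurableSet_Ioo fun r hr => ?_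
        have hb0 : 0 ≤ b := ha.trans hab
        exact mul_le_mul (Real.rpow_le_rpow hb0 hr.1.le hx) (hfc r (hsub hr)) hc
          (Real.rpow_nonneg (hb0.trans hr.1.le) x)
    _ ≤ ∫ r in Ioo a 1, r ^ x * f r := by
        refine setIntegral_mono_set hint ?_ hsub.eventuallyLE
        filter_upwards [ae_restrict_mem measurableSet_Ioo] with r hr
        exact mul_nonneg (Real.rpow_nonneg (ha.trans hr.1.le) x) (hc.trans (hfc r hr))

lemma setIntegral_rpow_mul_isBigO {a : ℝ} (ha : 0 ≤ a) (hs : MeasurableSet s)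
    (hsa : s ⊆ Icc 0 a) (hf : IntegrableOn f s) :
    (fun x : ℝ => ∫ r in s, r ^ x * f r) =O[atTop] fun x => a ^ x :=
  .of_bound (∫ r in s, |f r|) <| (eventually_ge_atTop 0).mono fun x hx => by
    rw [Real.norm_eq_abs, Real.norm_of_nonneg (Real.rpow_nonneg ha x), mul_comm]
    exact abs_setIntegral_rpow_mul_le hs hsa hx hf

lemma rpow_isBigO_setIntegral_Ioo_rpow_mul {a b c : ℝ} (ha : 0 ≤ a) (hab : a ≤ b) (hb : b < 1)
    (hc : 0 < c) (hf : IntegrableOn f (Ioo a 1)) (hfc : ∀ r ∈ Ioo a 1, c ≤ f r) :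
    (fun x : ℝ => b ^ x) =O[atTop] fun x => ∫ r in Ioo a 1, r ^ x * f r := by
  have hk : 0 < c * (1 - b) := mul_pos hc (sub_pos.2 hb)
  refine .of_bound (c * (1 - b))⁻¹ <| (eventually_ge_atTop 0).mono fun x hx => ?_
  rw [Real.norm_of_nonneg (Real.rpow_nonneg (ha.trans hab) x), Real.norm_eq_abs, inv_mul_eq_div,
    le_div_iff₀ hk, mul_comm]
  exact (mul_rpow_le_setIntegral_Ioo_rpow_mul ha hab hb.le hc.le hx hf hfc).trans (le_abs_self _)

end Moments

lemma setIntegral_Ioo_eq_Ioc_add_Ioo {g : ℝ → ℝ} {l a u : ℝ} (hla : l ≤ a) (hau : a < u)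
    (hg : IntegrableOn g (Ioo l u)) :
    ∫ r in Ioo l u, g r = (∫ r in Ioc l a, g r) + ∫ r in Ioo a u, g r := by
  rw [← Ioc_union_Ioo_eq_Ioo hla hau] at hg ⊢
  exact setIntegral_union (Ioc_disjoint_Ioi_same.mono_right Ioo_subset_Ioi_self) measurableSet_Ioo
    (hg.mono_set subset_union_left) (hg.mono_set subset_union_right)

theorem stmt18_general (δ : ℝ → ℝ) (a c : ℝ) (ha : a ∈ Ioo (0:ℝ) 1) (hc : 0 < c)
    (hδ_int : IntegrableOn δ (Ioo (0:ℝ) 1))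
    (hδ_lower : ∀ r ∈ Ioo a 1, c ≤ δ r)
    (Φ Φt : ℝ → ℝ)
    (hΦ : ∀ x, Φ x = ∫ r in Ioo (0:ℝ) 1, r ^ x * δ r)
    (hΦt : ∀ x, Φt x = ∫ r in Ioo a 1, r ^ x * δ r) :
    Tendsto (fun x => Φ x / Φt x) atTop (nhds 1) := by
  obtain ⟨ha0, ha1⟩ := ha
  have hδ_Ioo : IntegrableOn δ (Ioo a 1) := hδ_int.mono_set (Ioo_subset_Ioo_left ha0.le)
  set T : ℝ → ℝ := fun x => ∫ r in Ioc 0 a, r ^ x * δ r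
  have hpos : ∀ᶠ x in atTop, 0 < Φt x := (eventually_ge_atTop 0).mono fun x hx => by
    refine lt_of_lt_of_le ?_ ((hΦt x).symm ▸
      mul_rpow_le_setIntegral_Ioo_rpow_mul ha0.le le_rfl ha1.le hc.le hx hδ_Ioo hδ_lower)
    exact mul_pos (mul_pos hc (sub_pos.2 ha1)) (Real.rpow_pos_of_pos ha0 x)
  have hsplit : ∀ᶠ x in atTop, 1 + T x / Φt x = Φ x / Φt x := by
    filter_upwards [hpos, eventually_ge_atTop 0] with x hx hx0
    rw [hΦ x, setIntegral_Ioo_eq_Ioc_add_Ioo ha0.le ha1 (integrableOn_rpow_mul measurableSet_Ioo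
      Ioo_subset_Icc_self hx0 hδ_int), ← hΦt x]
    field_simp
    ring
  obtain ⟨b, hab, hb1⟩ := exists_between ha1
  have hTo : T =o[atTop] Φt :=
    (setIntegral_rpow_mul_isBigO ha0.le measurableSet_Ioc Ioc_subset_Icc_self
      (hδ_int.mono_set (Ioc_subset_Ioo_right ha1))).trans_isLittleO
    ((isLittleO_rpow_rpow_of_lt_left ha0.le hab).trans_isBigO
      (by simpa only [← hΦt] using
        rpow_isBigO_setIntegral_Ioo_rpow_mul ha0.le hab.le hb1 hc hδ_Ioo hδ_lower))
  simpa using (hTo.tendsto_div_nhds_zero.const_add 1).congr' hsplit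

/-- Truncation comparison for moment functions: if `δ` is continuous, integrable and
bounded on `[0,1)` with `δ ≥ c > 0` on `(a,1)`, and `Φ(x) = ∫₀¹ rˣ δ(r) dr`,
`Φ̃(x) = ∫ₐ¹ rˣ δ(r) dr`, then `Φ(x)/Φ̃(x) → 1` as `x → ∞`. -/
theorem stmt18 (δ : ℝ → ℝ) (a c : ℝ) (ha : a ∈ Ioo (0:ℝ) 1) (hc : 0 < c)
    (hδ_cont : ContinuousOn δ (Ico (0:ℝ) 1))
    (hδ_int : IntegrableOn δ (Ioo (0:ℝ) 1))
    (hδ_bdd : ∃ B : ℝ, ∀ r ∈ Ico (0:ℝ) 1, |δ r| ≤ B)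
    (hδ_lower : ∀ r ∈ Ioo a 1, c ≤ δ r)
    (Φ Φt : ℝ → ℝ)
    (hΦ : ∀ x, Φ x = ∫ r in Ioo (0:ℝ) 1, r ^ x * δ r)
    (hΦt : ∀ x, Φt x = ∫ r in Ioo a 1, r ^ x * δ r) :
    Tendsto (fun x => Φ x / Φt x) atTop (nhds 1) :=
  stmt18_general δ a c ha hc hδ_int hδ_lower Φ Φt hΦ hΦt
end
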